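/- Let p be an odd prime, let m ≥ 2 be even, let a ∈ F_{p^m}^* satisfy Tr(a²) = 0, and let ρ = 0. Then the triple character sum ∑_{y ∈ F_p^*} ∑_{z ∈ F_p^*} ∑_{x ∈ F_{p^m}} ζ_p^{Tr(y x² + a z x) − zρ} equals −(−1)^{(m/2)·((p−1)/2)²}·(p−1)²·p^{m/2}, where y and z are viewed as elements of F_{p^m} via the embedding of F_p. -/

import Mathlib

open Finset Polynomial

/-- `ζ_p ^ c` for `c ∈ F_p`, where `ζ_p = exp(2πi/p)`. Well defined via `c.val`. -/
noncomputable def zetaPow (p : ℕ) (c : ZMod p) : ℂ :=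
  Complex.exp (2 * Real.pi * Complex.I / p) ^ c.val

section zeta
variable (p : ℕ) [Fact p.Prime]

lemma zeta_pow_p : Complex.exp (2 * Real.pi * Complex.I / p) ^ p = 1 :=
  (Complex.isPrimitiveRoot_exp p (Fact.out : p.Prime).ne_zero).pow_eq_one

lemma zetaPow_add (c d : ZMod p) : zetaPow p (c + d) = zetaPow p c * zetaPow p d := by
  unfold zetaPow
  rw [← pow_add, ZMod.val_add]
  conv_rhs => rw [← Nat.div_add_mod (c.val + d.val) p]
  rw [pow_add, pow_mul, zeta_pow_p, one_pow, one_mul]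

lemma zetaPow_zero : zetaPow p 0 = 1 := by
  unfold zetaPow
  rw [ZMod.val_zero, pow_zero]

lemma zetaPow_ne_one {c : ZMod p} (hc : c ≠ 0) : zetaPow p c ≠ 1 := by
  have hprim := Complex.isPrimitiveRoot_exp p (Fact.out : p.Prime).ne_zero
  exact hprim.pow_ne_one_of_pos_of_lt
    (by simpa [pos_iff_ne_zero, ZMod.val_eq_zero] using hc) (ZMod.val_lt c)

end zeta

/-- translation trick: a character sum over a shift-closed set vanishes. -/
lemma sum_shift_eq_zero {F : Type*} [AddCommGroup F] [DecidableEq F]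
    (s : Finset F) (f : F → ℂ) (hf : ∀ v w, f (v + w) = f v * f w)
    (k₀ : F) (hcl : ∀ k, k ∈ s ↔ k + k₀ ∈ s) (hk₀ : f k₀ ≠ 1) :
    ∑ k ∈ s, f k = 0 := by
  have key : ∑ k ∈ s, f k = (∑ k ∈ s, f k) * f k₀ := by
    calc ∑ k ∈ s, f k = ∑ k ∈ s, f (k + k₀) := by
          refine Finset.sum_nbij' (fun k => k - k₀) (fun k => k + k₀) ?_ ?_ ?_ ?_ ?_
          · intro a ha
            have h : a - k₀ + k₀ = a := by abel
            rw [← h] at ha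
            exact (hcl _).mpr ha
          · intro a ha; exact (hcl a).mp ha
          · intro a _; simp
          · intro a _; simp
          · intro a _
            have h : a - k₀ + k₀ = a := by abel
            simp only [h]
      _ = (∑ k ∈ s, f k) * f k₀ := by
          rw [Finset.sum_mul]; exact Finset.sum_congr rfl fun k _ => hf k k₀
  have h0 : (∑ k ∈ s, f k) * (f k₀ - 1) = 0 := by
    rw [mul_sub, mul_one, ← key, sub_self]
  rcases mul_eq_zero.mp h0 with h | h
  · exact h
  · exact absurd (sub_eq_zero.mp h) hk₀

/-- a nonzero polynomial of degree < #s has a non-root in s. -/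
lemma exists_eval_ne_zero {F : Type*} [Field F] [DecidableEq F] (s : Finset F)
    (P : Polynomial F) (hP : P ≠ 0) (hdeg : P.natDegree < s.card) :
    ∃ x ∈ s, P.eval x ≠ 0 := by
  by_contra h
  push_neg at h
  have hsub : s ⊆ P.roots.toFinset := by
    intro x hx
    rw [Multiset.mem_toFinset, Polynomial.mem_roots hP]
    exact h x hx
  have := Finset.card_le_card hsub
  have h2 : P.roots.toFinset.card ≤ P.natDegree :=
    le_trans (Multiset.toFinset_card_le _) (Polynomial.card_roots' P)
  omega

/-- parity of (p^n - 1)/2 -/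
lemma parity_lemma (p n : ℕ) (hp : Odd p) :
    ((p ^ n - 1) / 2) % 2 = (n * ((p - 1) / 2)) % 2 := by
  induction n with
  | zero => simp
  | succ n ih =>
    obtain ⟨r, hr⟩ := id hp
    obtain ⟨A, hA⟩ := (hp.pow : Odd (p ^ n))
    have h1 : (p ^ n - 1) / 2 = A := by omega
    have h4 : (p - 1) / 2 = r := by omega
    have h5 : p ^ (n + 1) = 4 * (A * r) + 2 * A + 2 * r + 1 := by
      rw [pow_succ, hA, hr]; ring
    have h6 : (n + 1) * r = n * r + r := by ring
    rw [h1, h4] at ih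
    rw [h4, h6, h5]
    generalize A * r = C
    generalize hB : n * r = B at ih ⊢
    omega

/-- geometric sum identity in ℕ -/
lemma geom_nat (p m : ℕ) (hp : 1 ≤ p) :
    (p - 1) * (∑ i ∈ Finset.range m, p ^ i) = p ^ m - 1 := by
  induction m with
  | zero => simp
  | succ m ih =>
    rw [Finset.sum_range_succ, mul_add, ih]
    have h1 : 1 ≤ p ^ m := Nat.one_le_pow _ _ hp
    have h5 : 1 ≤ p ^ (m + 1) := Nat.one_le_pow _ _ hp
    zify [h1, h5, hp]
    rw [pow_succ]
    ring

lemma sum_pow_mod_two (p m : ℕ) (hp : Odd p) :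
    (∑ i ∈ Finset.range m, p ^ i) % 2 = m % 2 := by
  induction m with
  | zero => simp
  | succ m ih =>
    rw [Finset.sum_range_succ]
    have h : p ^ m % 2 = 1 := Nat.odd_iff.mp hp.pow
    omega

lemma trace_sum_pow (p m : ℕ) [Fact p.Prime] (F : Type*) [Field F] [Fintype F]
    [Algebra (ZMod p) F] (hcard : Fintype.card F = p ^ m) (x : F) :
    algebraMap (ZMod p) F (Algebra.trace (ZMod p) F x) = ∑ i ∈ Finset.range m, x ^ p ^ i := by
  have hp : p.Prime := Fact.out
  haveI : CharP F p := charP_of_injective_algebraMap (algebraMap (ZMod p) F).injective p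
  have hm : 0 < m := by
    rcases Nat.eq_zero_or_pos m with h | h
    · exfalso
      rw [h, pow_zero] at hcard
      exact Fintype.one_lt_card.ne' hcard
    · exact h
  -- Frobenius as algebra equivalence
  let σh : F →ₐ[ZMod p] F :=
    { toRingHom := frobenius F p
      commutes' := fun c => by
        show frobenius F p ((algebraMap (ZMod p) F) c) = (algebraMap (ZMod p) F) c
        rw [frobenius_def, ← map_pow, ZMod.pow_card] }
  have hσh : Function.Bijective σh :=
    (Finite.injective_iff_bijective).mp (frobenius F p).injective
  let σ : F ≃ₐ[ZMod p] F := AlgEquiv.ofBijective σh hσh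
  have hσ : ∀ y : F, σ y = y ^ p := fun y => rfl
  have hpow : ∀ (i : ℕ) (y : F), (σ ^ i) y = y ^ p ^ i := by
    intro i
    induction i with
    | zero => intro y; simp
    | succ i ih =>
      intro y
      rw [pow_succ, AlgEquiv.mul_apply, hσ y, ih, ← pow_mul, ← pow_succ']
  -- order considerations
  haveI := Classical.decEq F
  obtain ⟨g, hg⟩ := IsCyclic.exists_generator (α := Fˣ)
  have horder : orderOf g = p ^ m - 1 := by
    rw [orderOf_eq_card_of_forall_mem_zpowers hg, Nat.card_eq_fintype_card,
      Fintype.card_units, hcard]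
  have hσpow_ne : ∀ d, 0 < d → d < m → σ ^ d ≠ 1 := by
    intro d hd hdm h1
    have hgx : (g : F) ^ p ^ d = g := by
      have := congrArg (fun τ : F ≃ₐ[ZMod p] F => τ (g : F)) h1
      simpa [hpow d] using this
    have hne : (g : F) ≠ 0 := Units.ne_zero g
    have hgd : (g : F) ^ (p ^ d - 1) = 1 := by
      have hpd : 1 ≤ p ^ d := Nat.one_le_pow _ _ hp.pos
      have : (g : F) ^ (p ^ d - 1) * (g : F) = (g : F) ^ p ^ d := by
        rw [← pow_succ]
        congr 1
        omega
      rw [hgx] at this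
      field_simp at this
      exact this
    have hgd' : g ^ (p ^ d - 1) = 1 := by
      ext
      rw [Units.val_pow_eq_pow_val]
      simpa using hgd
    have hdvd : orderOf g ∣ p ^ d - 1 := orderOf_dvd_of_pow_eq_one hgd'
    rw [horder] at hdvd
    have hlt : p ^ d - 1 < p ^ m - 1 := by
      have := Nat.pow_lt_pow_right hp.one_lt hdm
      have h1d : 1 ≤ p ^ d := Nat.one_le_pow _ _ hp.pos
      omega
    have hpos : 0 < p ^ d - 1 := by
      have : 2 ≤ p ^ d := by
        calc 2 ≤ p := hp.two_le
        _ = p ^ 1 := (pow_one p).symm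
        _ ≤ p ^ d := Nat.pow_le_pow_right hp.pos hd
      omega
    exact absurd (Nat.le_of_dvd hpos hdvd) (by omega)
  -- injectivity of i ↦ σ^i on range m
  have hinj : ∀ i < m, ∀ j < m, σ ^ i = σ ^ j → i = j := by
    have key : ∀ i j, i ≤ j → j < m → σ ^ i = σ ^ j → i = j := by
      intro i j hij hjm h
      by_contra hne
      have hd : 0 < j - i := by omega
      have h2 : σ ^ (j - i) * σ ^ i = 1 * σ ^ i := by
        rw [one_mul, ← pow_add, Nat.sub_add_cancel hij, h]
      exact hσpow_ne (j - i) hd (by omega) (mul_right_cancel h2)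
    intro i hi j hj h
    rcases le_total i j with hle | hle
    · exact key i j hle hj h
    · exact (key j i hle hi h.symm).symm
  -- count of automorphisms
  have hrank : Module.finrank (ZMod p) F = m := by
    have hc := Module.card_eq_pow_finrank (K := ZMod p) (V := F)
    rw [ZMod.card, hcard] at hc
    exact (Nat.pow_right_injective hp.two_le hc.symm)
  have hcardaut : Fintype.card (F ≃ₐ[ZMod p] F) = m := by
    rw [← hrank]
    exact Nat.card_eq_fintype_card.symm.trans (IsGalois.card_aut_eq_finrank (ZMod p) F)
  have hbij : Function.Bijective (fun i : Fin m => σ ^ (i : ℕ)) := by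
    rw [Fintype.bijective_iff_injective_and_card]
    constructor
    · intro i j h
      exact Fin.ext (hinj i i.2 j j.2 h)
    · simp [hcardaut]
  rw [trace_eq_sum_automorphisms]
  rw [← Fintype.sum_bijective _ hbij _ (fun τ => τ x) (fun i => rfl), ← Fin.sum_univ_eq_sum_range]
  exact Finset.sum_congr rfl fun i _ => hpow i x

lemma gauss_val (p n : ℕ) [Fact p.Prime] (hpodd : Odd p) (hn : 0 < n)
    (F : Type*) [Field F] [Fintype F] [Algebra (ZMod p) F]
    (hcard : Fintype.card F = p ^ (2 * n)) :
    ∑ x : F, zetaPow p (Algebra.trace (ZMod p) F (x ^ 2)) =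
      (-1 : ℂ) ^ ((p ^ n + 1) / 2) * (p : ℂ) ^ n := by
  classical
  have hp : p.Prime := Fact.out
  have halg : Function.Injective (algebraMap (ZMod p) F) := (algebraMap (ZMod p) F).injective
  haveI : CharP F p := charP_of_injective_algebraMap halg p
  have hp2 : p ≠ 2 := by
    intro h
    rw [h] at hpodd
    have := Nat.odd_iff.mp hpodd
    omega
  have hchar : ringChar F ≠ 2 := by
    rw [ringChar.eq F p]
    exact hp2
  obtain ⟨q, hqdef⟩ : ∃ q : ℕ, q = p ^ n := ⟨p ^ n, rfl⟩
  have hqodd : Odd q := hqdef ▸ hpodd.pow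
  have hq2 : 2 ≤ q := by
    rw [hqdef]
    calc 2 ≤ p := hp.two_le
    _ = p ^ 1 := (pow_one p).symm
    _ ≤ p ^ n := Nat.pow_le_pow_right hp.pos hn
  have hq1 : 1 ≤ q := by omega
  have hq0 : q ≠ 0 := by omega
  have hcard' : Fintype.card F = q ^ 2 := by
    rw [hcard, hqdef, ← pow_mul, mul_comm]
  have hcardq : Fintype.card F = q * q := by rw [hcard']; ring
  -- trace and character
  set tr : F → ZMod p := fun v => Algebra.trace (ZMod p) F v with htrdef
  set Ψ : F → ℂ := fun v => zetaPow p (tr v) with hΨdef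
  have hΨ : ∀ v w : F, Ψ (v + w) = Ψ v * Ψ w := fun v w => by
    simp only [hΨdef]
    rw [show tr (v + w) = tr v + tr w from map_add (Algebra.trace (ZMod p) F) v w, zetaPow_add]
  have hΨ0 : Ψ 0 = 1 := by
    simp only [hΨdef]
    rw [show tr 0 = 0 from map_zero (Algebra.trace (ZMod p) F), zetaPow_zero]
  have htr : ∀ v : F, algebraMap (ZMod p) F (tr v) = ∑ i ∈ Finset.range (2 * n), v ^ p ^ i :=
    fun v => trace_sum_pow p (2 * n) F hcard v
  -- splitting of the trace along the subfield
  have hqpow : ∀ v : F, v ^ q = v ^ p ^ n := fun v => by rw [hqdef]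
  have hsplit : ∀ u k : F, k ^ q = k →
      algebraMap (ZMod p) F (tr (u * k)) = ∑ i ∈ Finset.range n, ((u + u ^ q) * k) ^ p ^ i := by
    intro u k hk
    rw [htr, two_mul, Finset.sum_range_add]
    have h1 : ∀ i, (u * k) ^ p ^ (n + i) = (u ^ q * k) ^ p ^ i := by
      intro i
      rw [pow_add, pow_mul]
      congr 1
      rw [mul_pow, ← hqpow, ← hqpow, hk]
    have h2 : ∀ i ∈ Finset.range n, (u * k) ^ p ^ (n + i) = (u ^ q * k) ^ p ^ i :=
      fun i _ => h1 i
    rw [Finset.sum_congr rfl h2, ← Finset.sum_add_distrib]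
    refine Finset.sum_congr rfl fun i _ => ?_
    rw [add_mul, add_pow_char_pow]
  -- the subfield as a finset
  set Kf : Finset F := Finset.univ.filter (fun x => x ^ q = x) with hKfdef
  have hKf : ∀ x : F, x ∈ Kf ↔ x ^ q = x := fun x => by
    simp [hKfdef]
  have hK0 : (0 : F) ∈ Kf := (hKf 0).mpr (zero_pow hq0)
  have hKadd : ∀ x y : F, x ∈ Kf → y ∈ Kf → x + y ∈ Kf := by
    intro x y hx hy
    rw [hKf] at hx hy ⊢
    rw [hqdef, add_pow_char_pow, ← hqdef, hx, hy]
  have hKneg : ∀ x : F, x ∈ Kf → -x ∈ Kf := by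
    intro x hx
    rw [hKf] at hx ⊢
    rw [hqodd.neg_pow, hx]
  have hKmul : ∀ x y : F, x ∈ Kf → y ∈ Kf → x * y ∈ Kf := by
    intro x y hx hy
    rw [hKf] at hx hy ⊢
    rw [mul_pow, hx, hy]
  have hKinv : ∀ x : F, x ∈ Kf → x⁻¹ ∈ Kf := by
    intro x hx
    rw [hKf] at hx ⊢
    rw [inv_pow, hx]
  have hKpow1 : ∀ k : F, k ∈ Kf → k ≠ 0 → k ^ (q - 1) = 1 := by
    intro k hk hk0
    have h : k ^ (q - 1) * k = 1 * k := by
      rw [one_mul, ← pow_succ, Nat.sub_add_cancel hq1]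
      exact (hKf k).mp hk
    exact mul_right_cancel₀ hk0 h
  -- cyclic group generator
  obtain ⟨g, hg⟩ := IsCyclic.exists_generator (α := Fˣ)
  have horder : orderOf g = q ^ 2 - 1 := by
    rw [orderOf_eq_card_of_forall_mem_zpowers hg, Nat.card_eq_fintype_card,
      Fintype.card_units, hcard']
  have hq21 : 1 ≤ q ^ 2 := Nat.one_le_pow _ _ (by omega)
  have hq4 : 4 ≤ q ^ 2 := by
    have h : q ^ 2 = q * q := by ring
    rw [h]
    calc 4 = 2 * 2 := by norm_num
    _ ≤ q * q := Nat.mul_le_mul hq2 hq2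
  have hdvd : q - 1 ∣ q ^ 2 - 1 := by
    refine ⟨q + 1, ?_⟩
    obtain ⟨c, hc⟩ := Nat.exists_eq_add_of_le hq1
    subst hc
    have e3 : (1 + c) ^ 2 = 1 + (c * c + 2 * c) := by ring
    have e1 : 1 + c - 1 = c := by omega
    have e2 : c * (1 + c + 1) = c * c + 2 * c := by ring
    rw [e3, e1, e2]
    generalize c * c = C
    omega
  -- the primitive root of order q-1 and card Kf
  have hKfcard : Kf.card = q := by
    set ζu : Fˣ := g ^ ((q ^ 2 - 1) / (q - 1)) with hζu
    have hordζ : orderOf ζu = q - 1 := by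
      rw [hζu, orderOf_pow, horder, Nat.gcd_eq_right (Nat.div_dvd_of_dvd hdvd),
        Nat.div_div_self hdvd (by omega)]
    have hordζ' : orderOf ((ζu : F)) = q - 1 := by rw [orderOf_units, hordζ]
    have hprim : IsPrimitiveRoot ((ζu : F)) (q - 1) := hordζ' ▸ IsPrimitiveRoot.orderOf (ζu : F)
    have hqm1 : 0 < q - 1 := by omega
    have hins : Kf = insert (0 : F) (Polynomial.nthRootsFinset (q - 1) (1 : F)) := by
      ext x
      rw [hKf, Finset.mem_insert, Polynomial.mem_nthRootsFinset hqm1 (1 : F)]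
      constructor
      · intro hx
        rcases eq_or_ne x 0 with h0 | h0
        · exact Or.inl h0
        · refine Or.inr ?_
          have hxx : x ^ (q - 1) * x = 1 * x := by
            rw [one_mul, ← pow_succ, Nat.sub_add_cancel hq1, hx]
          exact mul_right_cancel₀ h0 hxx
      · rintro (rfl | hx)
        · exact zero_pow hq0
        · calc x ^ q = x ^ (q - 1) * x := by rw [← pow_succ, Nat.sub_add_cancel hq1]
          _ = x := by rw [hx, one_mul]
    rw [hins, Finset.card_insert_of_notMem, hprim.card_nthRootsFinset]
    · omega
    · intro h0
      have := (Polynomial.mem_nthRootsFinset hqm1 (1 : F)).mp h0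
      rw [zero_pow (by omega : q - 1 ≠ 0)] at this
      exact zero_ne_one this
  -- the element δ with δ^q = -δ
  have hhalfmul : ((q + 1) / 2) * (q - 1) = (q ^ 2 - 1) / 2 := by
    obtain ⟨r, hr⟩ := hqodd
    have h1 : (q + 1) / 2 = r + 1 := by omega
    have h2 : q - 1 = 2 * r := by omega
    have h3 : q ^ 2 = 4 * (r * r) + 4 * r + 1 := by rw [hr]; ring
    have h4 : (r + 1) * (2 * r) = 2 * (r * r) + 2 * r := by ring
    rw [h1, h2, h3, h4]
    generalize r * r = R
    omega
  set δu : Fˣ := g ^ ((q + 1) / 2) with hδu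
  set δ : F := (δu : F) with hδdef
  have hδne : δ ≠ 0 := Units.ne_zero δu
  have hgpow_ne : g ^ ((q ^ 2 - 1) / 2) ≠ 1 := by
    apply pow_ne_one_of_lt_orderOf
    · omega
    · rw [horder]; omega
  have hδq1 : δ ^ (q - 1) = -1 := by
    have hcoe : δ ^ (q - 1) = ((g ^ ((q ^ 2 - 1) / 2) : Fˣ) : F) := by
      rw [hδdef, hδu, ← Units.val_pow_eq_pow_val, ← pow_mul, hhalfmul]
    have hsq : (((g ^ ((q ^ 2 - 1) / 2) : Fˣ) : F)) ^ 2 = 1 := by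
      rw [← Units.val_pow_eq_pow_val, ← pow_mul]
      have : (q ^ 2 - 1) / 2 * 2 = q ^ 2 - 1 := by
        obtain ⟨r, hr⟩ := hqodd.pow (n := 2)
        omega
      rw [this, ← horder, pow_orderOf_eq_one]
      rfl
    have hne1 : (((g ^ ((q ^ 2 - 1) / 2) : Fˣ) : F)) ≠ 1 := by
      intro h
      exact hgpow_ne (Units.ext h)
    set h : F := ((g ^ ((q ^ 2 - 1) / 2) : Fˣ) : F)
    have hfact : (h - 1) * (h + 1) = 0 := by
      have : h ^ 2 = 1 := hsq
      linear_combination this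
    rcases mul_eq_zero.mp hfact with hc | hc
    · exact absurd (by linear_combination hc) hne1
    · rw [hcoe]
      show h = -1
      linear_combination hc
  have hδq : δ ^ q = -δ := by
    calc δ ^ q = δ ^ (q - 1) * δ := by rw [← pow_succ, Nat.sub_add_cancel hq1]
    _ = -δ := by rw [hδq1]; ring
  -- quadratic character
  set η : F → ℂ := fun u => ((quadraticChar F u : ℤ) : ℂ) with hηdef
  have hηmul : ∀ u v : F, η (u * v) = η u * η v := fun u v => by
    simp only [hηdef]
    rw [map_mul]
    push_cast
    ring
  have hη0 : η 0 = 0 := by simp [hηdef]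
  have hcardhalf : Fintype.card F / 2 = ((q + 1) / 2) * (q - 1) := by
    rw [hcard', hhalfmul]
    obtain ⟨t, ht⟩ := hqodd.pow (n := 2)
    omega
  have hηK : ∀ k : F, k ∈ Kf → k ≠ 0 → η k = 1 := by
    intro k hk hk0
    have hsq : IsSquare k := by
      rw [FiniteField.isSquare_iff hchar hk0, hcardhalf, mul_comm, pow_mul,
        hKpow1 k hk hk0, one_pow]
    have h2 := (quadraticChar_one_iff_isSquare hk0).mpr hsq
    simp only [hηdef]
    rw [h2]
    norm_num
  have hηδ : η δ = (-1 : ℂ) ^ ((q + 1) / 2) := by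
    have hpowδ : δ ^ (Fintype.card F / 2) = (-1 : F) ^ ((q + 1) / 2) := by
      rw [hcardhalf, mul_comm, pow_mul, hδq1]
    rcases Nat.even_or_odd ((q + 1) / 2) with he | ho
    · have h1 : δ ^ (Fintype.card F / 2) = 1 := by rw [hpowδ, he.neg_one_pow]
      have hsq : IsSquare δ := (FiniteField.isSquare_iff hchar hδne).mpr h1
      have h2 := (quadraticChar_one_iff_isSquare hδne).mpr hsq
      simp only [hηdef]
      rw [h2, he.neg_one_pow]
      norm_num
    · have h1 : δ ^ (Fintype.card F / 2) = -1 := by rw [hpowδ, ho.neg_one_pow]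
      have hnsq : ¬ IsSquare δ := by
        intro hs
        rw [FiniteField.isSquare_iff hchar hδne] at hs
        rw [hs] at h1
        exact Ring.neg_one_ne_one_of_char_ne_two hchar h1.symm
      have h2 := quadraticChar_neg_one_iff_not_isSquare.mpr hnsq
      simp only [hηdef]
      rw [h2, ho.neg_one_pow]
      norm_num
  have hηsum : ∑ u : F, η u = 0 := by
    simp only [hηdef]
    rw [← Int.cast_sum]
    norm_cast
    exact_mod_cast quadraticChar_sum_zero hchar
  -- nontriviality of Ψ
  have hψnontriv : ∃ v : F, tr v ≠ 0 := by
    by_contra hcon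
    push_neg at hcon
    set P : Polynomial F := ∑ i ∈ Finset.range (2 * n), Polynomial.X ^ p ^ i with hP
    have hPeval : ∀ v : F, P.eval v = 0 := by
      intro v
      have h := htr v
      rw [hcon v, map_zero] at h
      rw [hP]
      rw [Polynomial.eval_finset_sum]
      simp only [Polynomial.eval_pow, Polynomial.eval_X]
      exact h.symm
    have hPcoeff : P.coeff 1 = 1 := by
      rw [hP, Polynomial.finset_sum_coeff]
      rw [Finset.sum_eq_single 0]
      · simp
      · intro i _ hi
        rw [Polynomial.coeff_X_pow]
        have : p ^ i ≠ 1 := by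
          have : p ^ i ≥ p := by
            calc p = p ^ 1 := (pow_one p).symm
            _ ≤ p ^ i := Nat.pow_le_pow_right hp.pos (by omega)
          have h2p := hp.two_le
          omega
        simp [Ne.symm this]
      · intro h
        exact absurd (Finset.mem_range.mpr (by omega)) h
    have hPne : P ≠ 0 := fun h0 => by simp [h0] at hPcoeff
    have hPdeg : P.natDegree < Fintype.card F := by
      have : P.natDegree ≤ p ^ (2 * n - 1) := by
        rw [hP]
        refine Polynomial.natDegree_sum_le_of_forall_le _ _ fun i hi => ?_
        rw [Polynomial.natDegree_X_pow]
        exact Nat.pow_le_pow_right hp.pos (by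
          have := Finset.mem_range.mp hi
          omega)
      have h2 : p ^ (2 * n - 1) < p ^ (2 * n) :=
        Nat.pow_lt_pow_right hp.one_lt (by omega)
      rw [hcard]
      omega
    obtain ⟨x, _, hx⟩ := exists_eval_ne_zero Finset.univ P hPne
      (by rw [Finset.card_univ]; exact hPdeg)
    exact hx (hPeval x)
  obtain ⟨v₀, hv₀⟩ := hψnontriv
  have hΨsum : ∑ v : F, Ψ v = 0 :=
    sum_shift_eq_zero Finset.univ Ψ hΨ v₀ (fun k => by simp)
      (zetaPow_ne_one p hv₀)
  -- S(u) for u with u^q = -u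
  have hSA : ∀ u : F, u ^ q = -u → ∑ k ∈ Kf, Ψ (u * k) = (q : ℂ) := by
    intro u hu
    have hone : ∀ k ∈ Kf, Ψ (u * k) = 1 := by
      intro k hk
      have h0 : tr (u * k) = 0 := by
        apply halg
        rw [map_zero, hsplit u k ((hKf k).mp hk)]
        have hz : u + u ^ q = 0 := by rw [hu]; ring
        rw [hz]
        refine Finset.sum_eq_zero fun i _ => ?_
        rw [zero_mul, zero_pow (pow_ne_zero _ hp.ne_zero)]
      simp only [hΨdef]
      rw [h0, zetaPow_zero]
    rw [Finset.sum_congr rfl hone, Finset.sum_const, hKfcard]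
    simp
  -- S(u) = 0 otherwise
  have hSB : ∀ u : F, u ≠ 0 → u ^ q ≠ -u → ∑ k ∈ Kf, Ψ (u * k) = 0 := by
    intro u hu0 hunq
    set s : F := u + u ^ q with hsdef
    have hsne : s ≠ 0 := by
      intro h
      exact hunq (by rw [hsdef] at h; linear_combination h)
    have hsK : s ∈ Kf := by
      rw [hKf, hsdef]
      have huq2 : (u ^ q) ^ q = u := by
        rw [← pow_mul, ← hcardq]
        exact FiniteField.pow_card u
      conv_lhs => rw [hqdef, add_pow_char_pow, ← hqdef]
      rw [huq2, add_comm]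
    obtain ⟨k₀, hk₀K, hk₀⟩ : ∃ k ∈ Kf, tr (u * k) ≠ 0 := by
      by_contra hcon
      push_neg at hcon
      set P : Polynomial F := ∑ i ∈ Finset.range n, Polynomial.X ^ p ^ i with hP
      have hProots : ∀ w ∈ Kf, P.eval w = 0 := by
        intro w hw
        have hkK : s⁻¹ * w ∈ Kf := hKmul _ _ (hKinv _ hsK) hw
        have h0 := hcon (s⁻¹ * w) hkK
        have heq := hsplit u (s⁻¹ * w) ((hKf _).mp hkK)
        rw [h0, map_zero] at heq
        have hsw : s * (s⁻¹ * w) = w := by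
          field_simp
        rw [← hsdef, hsw] at heq
        rw [hP, Polynomial.eval_finset_sum]
        simp only [Polynomial.eval_pow, Polynomial.eval_X]
        exact heq.symm
      have hPcoeff : P.coeff 1 = 1 := by
        rw [hP, Polynomial.finset_sum_coeff]
        rw [Finset.sum_eq_single 0]
        · simp
        · intro i _ hi
          rw [Polynomial.coeff_X_pow]
          have : p ^ i ≠ 1 := by
            have : p ^ i ≥ p := by
              calc p = p ^ 1 := (pow_one p).symm
              _ ≤ p ^ i := Nat.pow_le_pow_right hp.pos (by omega)
            have h2p := hp.two_le
            omega
          simp [Ne.symm this]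
        · intro h
          exact absurd (Finset.mem_range.mpr (by omega)) h
      have hPne : P ≠ 0 := fun h0 => by simp [h0] at hPcoeff
      have hPdeg : P.natDegree < Kf.card := by
        have hb : P.natDegree ≤ p ^ (n - 1) := by
          rw [hP]
          refine Polynomial.natDegree_sum_le_of_forall_le _ _ fun i hi => ?_
          rw [Polynomial.natDegree_X_pow]
          exact Nat.pow_le_pow_right hp.pos (by
            have := Finset.mem_range.mp hi
            omega)
        have h2 : p ^ (n - 1) < p ^ n := Nat.pow_lt_pow_right hp.one_lt (by omega)
        rw [hKfcard]
        omega
      obtain ⟨w, hw, hne⟩ := exists_eval_ne_zero Kf P hPne hPdeg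
      exact hne (hProots w hw)
    refine sum_shift_eq_zero Kf (fun k => Ψ (u * k))
      (fun v w => by
        show Ψ (u * (v + w)) = Ψ (u * v) * Ψ (u * w)
        rw [mul_add, hΨ]) k₀ ?_ (zetaPow_ne_one p hk₀)
    intro k
    constructor
    · intro hk
      exact hKadd _ _ hk hk₀K
    · intro hk
      have : k = (k + k₀) + (-k₀) := by ring
      rw [this]
      exact hKadd _ _ hk (hKneg _ hk₀K)
  -- cardinality of Kf.erase 0
  have hKecard : (Kf.erase 0).card = q - 1 := by
    rw [Finset.card_erase_of_mem hK0, hKfcard]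
  set G' : ℂ := ∑ u : F, η u * Ψ u with hG'
  have hqC : ((q : ℂ) - 1) ≠ 0 := by
    have h1 : ((q : ℕ) : ℂ) ≠ ((1 : ℕ) : ℂ) := fun h => (by omega : q ≠ 1) (Nat.cast_inj.mp h)
    simpa using sub_ne_zero.mpr h1
  -- way 1
  have hway1 : ∑ k ∈ Kf.erase 0, ∑ u : F, η u * Ψ (u * k) = ((q : ℂ) - 1) * G' := by
    have hterm : ∀ k ∈ Kf.erase 0, (∑ u : F, η u * Ψ (u * k)) = G' := by
      intro k hk
      obtain ⟨hk0, hkK⟩ := Finset.mem_erase.mp hk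
      have h1 : ∑ u : F, η u * Ψ (u * k) = ∑ v : F, η (v * k⁻¹) * Ψ v := by
        apply Fintype.sum_bijective (fun u : F => u * k) ((Equiv.mulRight₀ k hk0).bijective)
        intro u
        rw [mul_assoc, mul_inv_cancel₀ hk0, mul_one]
      have h2 : ∀ v : F, η (v * k⁻¹) * Ψ v = η v * Ψ v := by
        intro v
        rw [hηmul, hηK k⁻¹ (hKinv _ hkK) (inv_ne_zero hk0), mul_one]
      rw [h1, Finset.sum_congr rfl fun v _ => h2 v]
    rw [Finset.sum_congr rfl hterm, Finset.sum_const, hKecard, nsmul_eq_mul,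
      Nat.cast_sub hq1, Nat.cast_one]
  -- way 2
  have hway2 : ∑ k ∈ Kf.erase 0, ∑ u : F, η u * Ψ (u * k)
      = (q : ℂ) * (((q : ℂ) - 1) * η δ) := by
    rw [Finset.sum_comm]
    have h1 : ∀ u : F, ∑ k ∈ Kf.erase 0, η u * Ψ (u * k)
        = η u * ((∑ k ∈ Kf, Ψ (u * k)) - 1) := by
      intro u
      rw [← Finset.mul_sum]
      congr 1
      have hsum := Finset.add_sum_erase Kf (fun k => Ψ (u * k)) hK0
      have h0 : Ψ (u * 0) = 1 := by rw [mul_zero, hΨ0]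
      rw [← hsum]
      show (∑ k ∈ Kf.erase 0, Ψ (u * k)) = Ψ (u * 0) + (∑ k ∈ Kf.erase 0, Ψ (u * k)) - 1
      rw [h0]
      ring
    rw [Finset.sum_congr rfl fun u _ => h1 u]
    have hsplit2 : ∑ u : F, η u * ((∑ k ∈ Kf, Ψ (u * k)) - 1)
        = ∑ u : F, η u * (∑ k ∈ Kf, Ψ (u * k)) - ∑ u : F, η u := by
      rw [← Finset.sum_sub_distrib]
      exact Finset.sum_congr rfl fun u _ => by ring
    rw [hsplit2, hηsum, sub_zero]
    have hD : ∑ u : F, η u * (∑ k ∈ Kf, Ψ (u * k))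
        = ∑ u ∈ Finset.univ.filter (fun u : F => u ≠ 0 ∧ u ^ q = -u), η u * (q : ℂ) := by
      rw [← Finset.sum_filter_add_sum_filter_not Finset.univ
        (fun u : F => u ≠ 0 ∧ u ^ q = -u) (fun u => η u * (∑ k ∈ Kf, Ψ (u * k)))]
      have hz : ∀ u ∈ Finset.univ.filter (fun u : F => ¬(u ≠ 0 ∧ u ^ q = -u)),
          η u * (∑ k ∈ Kf, Ψ (u * k)) = 0 := by
        intro u hu
        have hcase := (Finset.mem_filter.mp hu).2
        by_cases h0 : u = 0
        · rw [h0, hη0, zero_mul]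
        · have hne : u ^ q ≠ -u := fun hq' => hcase ⟨h0, hq'⟩
          rw [hSB u h0 hne, mul_zero]
      rw [Finset.sum_eq_zero hz, add_zero]
      refine Finset.sum_congr rfl fun u hu => ?_
      have h2 := (Finset.mem_filter.mp hu).2.2
      rw [hSA u h2]
    have hbij : ∑ k ∈ Kf.erase 0, η (δ * k)
        = ∑ u ∈ Finset.univ.filter (fun u : F => u ≠ 0 ∧ u ^ q = -u), η u := by
      refine Finset.sum_nbij' (fun k => δ * k) (fun u => δ⁻¹ * u) ?_ ?_ ?_ ?_ ?_
      · intro k hk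
        obtain ⟨hk0, hkK⟩ := Finset.mem_erase.mp hk
        refine Finset.mem_filter.mpr ⟨Finset.mem_univ _, mul_ne_zero hδne hk0, ?_⟩
        rw [mul_pow, hδq, (hKf k).mp hkK]
        ring
      · intro u hu
        obtain ⟨-, hu0, huq⟩ := Finset.mem_filter.mp hu
        refine Finset.mem_erase.mpr ⟨mul_ne_zero (inv_ne_zero hδne) hu0, (hKf _).mpr ?_⟩
        rw [mul_pow, inv_pow, hδq, huq]
        rw [show ((-δ)⁻¹ : F) = -(δ⁻¹) by field_simp]
        ring
      · intro k _
        show δ⁻¹ * (δ * k) = k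
        rw [← mul_assoc, inv_mul_cancel₀ hδne, one_mul]
      · intro u _
        show δ * (δ⁻¹ * u) = u
        rw [← mul_assoc, mul_inv_cancel₀ hδne, one_mul]
      · intro k _
        rfl
    have hDval : ∑ u ∈ Finset.univ.filter (fun u : F => u ≠ 0 ∧ u ^ q = -u), η u
        = ((q : ℂ) - 1) * η δ := by
      rw [← hbij]
      have hc : ∀ k ∈ Kf.erase 0, η (δ * k) = η δ := by
        intro k hk
        obtain ⟨hk0, hkK⟩ := Finset.mem_erase.mp hk
        rw [hηmul, hηK k hkK hk0, mul_one]
      rw [Finset.sum_congr rfl hc, Finset.sum_const, hKecard, nsmul_eq_mul,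
        Nat.cast_sub hq1, Nat.cast_one]
    rw [hD, ← Finset.sum_mul, hDval]
    ring
  -- combine the two ways
  have hG'val : G' = (q : ℂ) * η δ := by
    have heq : ((q : ℂ) - 1) * G' = ((q : ℂ) - 1) * ((q : ℂ) * η δ) := by
      rw [hway1.symm.trans hway2]
      ring
    exact mul_left_cancel₀ hqC heq
  -- fiber decomposition of the Gauss sum
  have hfib : ∑ x : F, Ψ (x ^ 2) = G' := by
    have h1 : ∑ x : F, Ψ (x ^ 2) = ∑ u : F, (η u + 1) * Ψ u := by
      rw [← Finset.sum_fiberwise Finset.univ (fun x : F => x ^ 2) (fun x : F => Ψ (x ^ 2))]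
      refine Finset.sum_congr rfl fun u _ => ?_
      have hval : ∀ x ∈ Finset.univ.filter (fun x : F => x ^ 2 = u), Ψ (x ^ 2) = Ψ u := by
        intro x hx
        rw [(Finset.mem_filter.mp hx).2]
      rw [Finset.sum_congr rfl hval, Finset.sum_const, nsmul_eq_mul]
      congr 1
      have hc := quadraticChar_card_sqrts hchar u
      have hset : {x : F | x ^ 2 = u}.toFinset = Finset.univ.filter (fun x : F => x ^ 2 = u) := by
        ext x
        simp
      rw [hset] at hc
      have : ((Finset.univ.filter (fun x : F => x ^ 2 = u)).card : ℤ) = quadraticChar F u + 1 := hc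
      calc ((Finset.univ.filter (fun x : F => x ^ 2 = u)).card : ℂ)
          = (((Finset.univ.filter (fun x : F => x ^ 2 = u)).card : ℤ) : ℂ) := by push_cast; ring
        _ = ((quadraticChar F u + 1 : ℤ) : ℂ) := by rw [this]
        _ = η u + 1 := by push_cast [hηdef]; ring
    rw [h1]
    have h2 : ∀ u : F, (η u + 1) * Ψ u = η u * Ψ u + Ψ u := fun u => by ring
    rw [Finset.sum_congr rfl fun u _ => h2 u, Finset.sum_add_distrib, hΨsum, add_zero]
  show ∑ x : F, Ψ (x ^ 2) = _
  rw [hfib, hG'val, hηδ, hqdef]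
  push_cast
  ring

theorem stmt_9 (p m : ℕ) [Fact p.Prime] (hp : Odd p) (hm : 2 ≤ m) (hmeven : Even m)
    (F : Type*) [Field F] [Fintype F] [Algebra (ZMod p) F]
    (hcard : Fintype.card F = p ^ m)
    (a : F) (ha : a ≠ 0) (hTa : Algebra.trace (ZMod p) F (a ^ 2) = 0)
    (ρ : ZMod p) (hρ : ρ = 0) :
    ∑ y ∈ Finset.univ \ {0}, ∑ z ∈ Finset.univ \ {0},
      ∑ x : F, zetaPow p
        (Algebra.trace (ZMod p) F
            (algebraMap (ZMod p) F y * x ^ 2 + a * algebraMap (ZMod p) F z * x) - z * ρ) =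
      -((-1 : ℂ) ^ (m / 2 * ((p - 1) / 2) ^ 2) * ((p : ℂ) - 1) ^ 2 * (p : ℂ) ^ (m / 2)) := by
  classical
  subst hρ
  have hprime : p.Prime := Fact.out
  have halg : Function.Injective (algebraMap (ZMod p) F) := (algebraMap (ZMod p) F).injective
  haveI : CharP F p := charP_of_injective_algebraMap halg p
  have hp2 : p ≠ 2 := by
    have h := Nat.odd_iff.mp hp
    omega
  have hp3 : 3 ≤ p := by
    have := hprime.two_le
    have h := Nat.odd_iff.mp hp
    omega
  have hchar : ringChar F ≠ 2 := by rw [ringChar.eq F p]; exact hp2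
  obtain ⟨n, hn⟩ : ∃ n, m = 2 * n := by
    obtain ⟨k, hk⟩ := hmeven
    exact ⟨k, by omega⟩
  have hn0 : 0 < n := by omega
  have hcard2n : Fintype.card F = p ^ (2 * n) := by rw [hcard, hn]
  have hG := gauss_val p n hp hn0 F hcard2n
  set G : ℂ := ∑ x : F, zetaPow p (Algebra.trace (ZMod p) F (x ^ 2)) with hGdef
  have h2 : (2 : F) ≠ 0 := Ring.two_ne_zero hchar
  have h4 : (4 : F) ≠ 0 := by
    have h : (4 : F) = 2 * 2 := by norm_num
    rw [h]
    exact mul_ne_zero h2 h2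
  -- every nonzero scalar is a square in F
  have hASq : ∀ y : ZMod p, y ≠ 0 → ∃ w : F, w ≠ 0 ∧ w ^ 2 = algebraMap (ZMod p) F y := by
    intro y hy
    have hyF : algebraMap (ZMod p) F y ≠ 0 := fun h => hy (halg (by rw [h, map_zero]))
    have hT : (p - 1) * (∑ i ∈ Finset.range m, p ^ i) = p ^ m - 1 :=
      geom_nat p m hprime.one_le
    have hTpar : (∑ i ∈ Finset.range m, p ^ i) % 2 = 0 := by
      rw [sum_pow_mod_two p m hp]
      omega
    obtain ⟨T2, hT2⟩ : 2 ∣ (∑ i ∈ Finset.range m, p ^ i) := by omega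
    have hpm : Odd (p ^ m) := hp.pow
    obtain ⟨t, ht⟩ := hpm
    have hT'' : 2 * ((p - 1) * T2) = p ^ m - 1 := by
      rw [← hT, hT2]
      ring
    have hc2 : Fintype.card F / 2 = (p - 1) * T2 := by
      rw [hcard]
      generalize (p - 1) * T2 = X at hT'' ⊢
      omega
    have hsq : IsSquare (algebraMap (ZMod p) F y) := by
      rw [FiniteField.isSquare_iff hchar hyF, hc2, ← map_pow, pow_mul,
        ZMod.pow_card_sub_one_eq_one hy, one_pow, map_one]
    obtain ⟨w, hw⟩ := hsq
    refine ⟨w, ?_, ?_⟩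
    · intro h0
      rw [h0, mul_zero] at hw
      exact hyF hw
    · rw [sq, ← hw]
  -- evaluation of the inner sum
  have hinner : ∀ y z : ZMod p, y ≠ 0 → z ≠ 0 →
      (∑ x : F, zetaPow p
        (Algebra.trace (ZMod p) F
            (algebraMap (ZMod p) F y * x ^ 2 + a * algebraMap (ZMod p) F z * x) - z * 0)) = G := by
    intro y z hy hz
    obtain ⟨w, hw0, hw2⟩ := hASq y hy
    set Y : F := algebraMap (ZMod p) F y with hY
    set Z : F := algebraMap (ZMod p) F z with hZ
    set c₀ : F := -(a * Z) ^ 2 * ((4 : F) * Y)⁻¹ with hc₀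
    set d : F := -(a * Z) * ((2 : F) * Y)⁻¹ with hd
    have hYne : Y ≠ 0 := by
      rw [hY]
      exact fun h => hy (halg (by rw [h, map_zero]))
    have hkey : ∀ u : F,
        Y * (w⁻¹ * u + d) ^ 2 + a * Z * (w⁻¹ * u + d) = u ^ 2 + c₀ := by
      intro u
      rw [hd, hc₀]
      have hYw : Y = w ^ 2 := hw2.symm
      rw [hYw]
      have h8 : (8 : F) ≠ 0 := by
        have h : (8 : F) = 2 * 4 := by norm_num
        rw [h]
        exact mul_ne_zero h2 h4
      field_simp [hw0, h2, h4, h8]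
      ring
    have htrc₀ : Algebra.trace (ZMod p) F c₀ = 0 := by
      have hmap : algebraMap (ZMod p) F (-(z ^ 2) * ((4 : ZMod p) * y)⁻¹)
          = -(Z ^ 2) * ((4 : F) * Y)⁻¹ := by
        rw [map_mul, map_neg, map_pow, map_inv₀, map_mul, map_ofNat]
      have hc₀' : c₀ = (-(z ^ 2) * ((4 : ZMod p) * y)⁻¹) • (a ^ 2) := by
        rw [Algebra.smul_def, hmap, hc₀]
        ring
      rw [hc₀', map_smul, hTa, smul_zero]
    have hterm : ∀ u : F,
        zetaPow p (Algebra.trace (ZMod p) F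
          (Y * (w⁻¹ * u + d) ^ 2 + a * Z * (w⁻¹ * u + d)))
        = zetaPow p (Algebra.trace (ZMod p) F (u ^ 2)) := by
      intro u
      rw [hkey u, map_add, htrc₀, add_zero]
    have hEquiv : ∑ u : F, zetaPow p (Algebra.trace (ZMod p) F
          (Y * (w⁻¹ * u + d) ^ 2 + a * Z * (w⁻¹ * u + d)))
        = ∑ x : F, zetaPow p (Algebra.trace (ZMod p) F (Y * x ^ 2 + a * Z * x)) := by
      apply Fintype.sum_bijective (fun u : F => w⁻¹ * u + d)
        ((Equiv.mulLeft₀ w⁻¹ (inv_ne_zero hw0)).trans (Equiv.addRight d)).bijective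
      intro u
      rfl
    calc ∑ x : F, zetaPow p
          (Algebra.trace (ZMod p) F (Y * x ^ 2 + a * Z * x) - z * 0)
        = ∑ x : F, zetaPow p (Algebra.trace (ZMod p) F (Y * x ^ 2 + a * Z * x)) := by
          refine Finset.sum_congr rfl fun x _ => ?_
          rw [mul_zero, sub_zero]
      _ = ∑ u : F, zetaPow p (Algebra.trace (ZMod p) F
            (Y * (w⁻¹ * u + d) ^ 2 + a * Z * (w⁻¹ * u + d))) := hEquiv.symm
      _ = ∑ u : F, zetaPow p (Algebra.trace (ZMod p) F (u ^ 2)) :=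
          Finset.sum_congr rfl fun u _ => hterm u
      _ = G := hGdef.symm
  -- the outer sums
  have hcardsd : ((Finset.univ \ {0} : Finset (ZMod p))).card = p - 1 := by
    rw [Finset.card_sdiff_of_subset (by simp)]
    simp [ZMod.card]
  have houter : (∑ y ∈ (Finset.univ \ {0} : Finset (ZMod p)),
      ∑ z ∈ (Finset.univ \ {0} : Finset (ZMod p)),
      ∑ x : F, zetaPow p
        (Algebra.trace (ZMod p) F
            (algebraMap (ZMod p) F y * x ^ 2 + a * algebraMap (ZMod p) F z * x) - z * 0))
      = ((p : ℂ) - 1) ^ 2 * G := by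
    calc (∑ y ∈ (Finset.univ \ {0} : Finset (ZMod p)),
        ∑ z ∈ (Finset.univ \ {0} : Finset (ZMod p)),
        ∑ x : F, zetaPow p
          (Algebra.trace (ZMod p) F
              (algebraMap (ZMod p) F y * x ^ 2 + a * algebraMap (ZMod p) F z * x) - z * 0))
        = ∑ _y ∈ (Finset.univ \ {0} : Finset (ZMod p)),
          ∑ _z ∈ (Finset.univ \ {0} : Finset (ZMod p)), G := by
          refine Finset.sum_congr rfl fun y hy => Finset.sum_congr rfl fun z hz => ?_
          have hy0 : y ≠ 0 := by
            have := (Finset.mem_sdiff.mp hy).2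
            simpa using this
          have hz0 : z ≠ 0 := by
            have := (Finset.mem_sdiff.mp hz).2
            simpa using this
          exact hinner y z hy0 hz0
      _ = ((p : ℂ) - 1) ^ 2 * G := by
          rw [Finset.sum_const, Finset.sum_const, hcardsd, smul_smul, nsmul_eq_mul,
            Nat.cast_mul, Nat.cast_sub hprime.one_le, Nat.cast_one]
          ring
  rw [houter, hG]
  -- final parity bookkeeping
  have hm2 : m / 2 = n := by omega
  have hneg : ∀ A B : ℕ, A % 2 = B % 2 → (-1 : ℂ) ^ A = (-1 : ℂ) ^ B := by
    intro A B h
    rcases Nat.even_or_odd A with hA | hA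
    · have hB : Even B := by
        rw [Nat.even_iff] at *
        omega
      rw [hA.neg_one_pow, hB.neg_one_pow]
    · have hB : Odd B := by
        rw [Nat.odd_iff] at *
        omega
      rw [hA.neg_one_pow, hB.neg_one_pow]
  have hpar : ((p ^ n + 1) / 2) % 2 = (n * ((p - 1) / 2) ^ 2 + 1) % 2 := by
    have h1 := parity_lemma p n hp
    obtain ⟨t, ht⟩ : Odd (p ^ n) := hp.pow
    set e : ℕ := (p - 1) / 2 with he
    have he2 : e ^ 2 % 2 = e % 2 := by
      have h01 : e % 2 = 0 ∨ e % 2 = 1 := by omega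
      have hp2' := Nat.pow_mod e 2 2
      rcases h01 with h | h <;> rw [hp2'] <;> rw [h] <;> norm_num
    have hmul : (n * e ^ 2) % 2 = (n * e) % 2 := by
      rw [Nat.mul_mod, he2, ← Nat.mul_mod]
    have hplus : (p ^ n + 1) / 2 = (p ^ n - 1) / 2 + 1 := by omega
    rw [hplus]
    omega
  have hfin : (-1 : ℂ) ^ ((p ^ n + 1) / 2) = -(-1 : ℂ) ^ (n * ((p - 1) / 2) ^ 2) := by
    rw [hneg _ _ hpar, pow_succ]
    ring
  rw [hfin, hm2]
  ring
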